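/- Let m and m' be real linear forms on E = ℝ^{2n}. Then for any Schwartz function a on E, e^{im/2} # a # e^{im/2} = e^{im} a (the Weyl conjugation by half-exponentials of the same linear form produces pointwise multiplication by e^{im}). -/

import Mathlib

/-!
For `m(x, ξ) = x·α + ξ·β`, multiplying a symbol by `e^{i x·α}` conjugates its Weyl quantization
by multiplication with `e^{i x·α/2}` (as `e^{i ((x+y)/2)·α} = e^{i x·α/2} e^{i y·α/2}`), and
multiplying it by `e^{i ξ·β}` conjugates it by translation by `β/2` (change of variables
`y ↦ y - β/2`). Composing the two produces `(e^{im/2})^w u(x) = e^{i (α/2)·(x + β/4)} u(x + β/2)`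
on both sides, up to the constant phase `e^{i α·β/8}`, which commutes with `a^w`.
-/

open MeasureTheory

/-- Euclidean pairing. -/
def dotp {n : ℕ} (x y : Fin n → ℝ) : ℝ := ∑ i, x i * y i

/-- The Weyl quantization of a symbol `a` on `T*ℝⁿ`, acting on a function `u`:
`a^w u(x) = (2π)^{-n} ∬ e^{i(x−y)·θ} a((x+y)/2, θ) u(y) dy dθ`. -/
noncomputable def weylOp {n : ℕ} (a : ((Fin n → ℝ) × (Fin n → ℝ)) → ℂ)
    (u : (Fin n → ℝ) → ℂ) (x : Fin n → ℝ) : ℂ :=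
  (((2 * Real.pi) ^ (-(n : ℝ)) : ℝ) : ℂ) *
    ∫ y : Fin n → ℝ, ∫ θ : Fin n → ℝ,
      Complex.exp (Complex.I * ((dotp (x - y) θ : ℝ) : ℂ)) *
        a ((2⁻¹ : ℝ) • (x + y), θ) * u y

open Matrix

lemma dotp_eq_dotProduct {n : ℕ} (x y : Fin n → ℝ) : dotp x y = x ⬝ᵥ y := rfl

lemma cexp_I_mul_dotp_add {n : ℕ} (v w z : Fin n → ℝ) :
    Complex.exp (Complex.I * ((dotp v (w + z) : ℝ) : ℂ)) =
      Complex.exp (Complex.I * ((dotp v w : ℝ) : ℂ)) *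
        Complex.exp (Complex.I * ((dotp v z : ℝ) : ℂ)) := by
  rw [dotp_eq_dotProduct, dotProduct_add, Complex.ofReal_add, mul_add, Complex.exp_add]
  rfl

section WeylOp

variable {n : ℕ} (a : ((Fin n → ℝ) × (Fin n → ℝ)) → ℂ) (u : (Fin n → ℝ) → ℂ)
  (x : Fin n → ℝ)

lemma weylOp_const_mul (c : ℂ) :
    weylOp a (fun y => c * u y) x = c * weylOp a u x := by
  unfold weylOp
  rw [mul_left_comm c, ← integral_const_mul c]
  congr 2 with y
  rw [← integral_const_mul c]
  congr 1 with θ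
  ring

lemma weylOp_cexp_fst_mul (α : Fin n → ℝ) :
    weylOp (fun p => Complex.exp (Complex.I * ((dotp p.1 α : ℝ) : ℂ)) * a p) u x =
      Complex.exp (Complex.I * ((dotp ((2⁻¹ : ℝ) • α) x : ℝ) : ℂ)) *
        weylOp a
          (fun y => Complex.exp (Complex.I * ((dotp ((2⁻¹ : ℝ) • α) y : ℝ) : ℂ)) * u y) x := by
  unfold weylOp
  rw [mul_left_comm (Complex.exp _), ← integral_const_mul (Complex.exp _)]
  congr 2 with y
  rw [← integral_const_mul (Complex.exp _)]
  congr 1 with θ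
  have hphase : dotp ((2⁻¹ : ℝ) • (x + y)) α = dotp ((2⁻¹ : ℝ) • α) (x + y) := by
    simp only [dotp_eq_dotProduct, smul_dotProduct, dotProduct_comm α]
  beta_reduce
  rw [hphase, cexp_I_mul_dotp_add]
  ring

lemma weylOp_cexp_snd_mul (β : Fin n → ℝ) :
    weylOp (fun p => Complex.exp (Complex.I * ((dotp p.2 β : ℝ) : ℂ)) * a p) u x =
      weylOp a (fun y => u (y + (2⁻¹ : ℝ) • β)) (x + (2⁻¹ : ℝ) • β) := by
  unfold weylOp
  congr 1
  conv_rhs => rw [← integral_sub_right_eq_self _ ((2⁻¹ : ℝ) • β)]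
  congr 1 with y
  congr 1 with θ
  beta_reduce
  have hfreq : x + (2⁻¹ : ℝ) • β - (y - (2⁻¹ : ℝ) • β) = (x - y) + β := by module
  have hmid : (2⁻¹ : ℝ) • (x + (2⁻¹ : ℝ) • β + (y - (2⁻¹ : ℝ) • β)) = (2⁻¹ : ℝ) • (x + y) := by
    module
  simp only [hfreq, hmid, sub_add_cancel, dotp_eq_dotProduct, add_dotProduct,
    dotProduct_comm β θ, Complex.ofReal_add, mul_add, Complex.exp_add]
  ring

end WeylOp

/-- For a real linear form `m(x,ξ) = x·am + ξ·bm` on `E = ℝ^{2n}` and a Schwartz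
function `a`, the Weyl conjugation `e^{im/2} # a # e^{im/2} = e^{im} a`, stated
on the operator level: `(e^{im} a)^w = (e^{im/2})^w ∘ a^w ∘ (e^{im/2})^w`, where
`(e^{im/2})^w u(x) = e^{i (am/2)·(x + bm/4)} u(x + bm/2)`. -/
theorem stmt17 (n : ℕ) (am bm : Fin n → ℝ)
    (a : SchwartzMap ((Fin n → ℝ) × (Fin n → ℝ)) ℂ) :
    ∀ (u : SchwartzMap (Fin n → ℝ) ℂ) (x : Fin n → ℝ),
      weylOp (fun p => Complex.exp (Complex.I * ((dotp p.1 am + dotp p.2 bm : ℝ) : ℂ)) * a p)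
          u x
        = Complex.exp (Complex.I * ((dotp ((2⁻¹ : ℝ) • am) (x + (4⁻¹ : ℝ) • bm) : ℝ) : ℂ)) *
            weylOp a
              (fun y =>
                Complex.exp
                    (Complex.I * ((dotp ((2⁻¹ : ℝ) • am) (y + (4⁻¹ : ℝ) • bm) : ℝ) : ℂ)) *
                  u (y + (2⁻¹ : ℝ) • bm))
              (x + (2⁻¹ : ℝ) • bm) := by
  intro u x
  have hsymbol :
      (fun p => Complex.exp (Complex.I * ((dotp p.1 am + dotp p.2 bm : ℝ) : ℂ)) * a p) =
        fun p => Complex.exp (Complex.I * ((dotp p.1 am : ℝ) : ℂ)) *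
          (Complex.exp (Complex.I * ((dotp p.2 bm : ℝ) : ℂ)) * a p) := by
    funext p
    rw [Complex.ofReal_add, mul_add, Complex.exp_add, mul_assoc]
  have hshift : ∀ y : Fin n → ℝ,
      Complex.exp (Complex.I * ((dotp ((2⁻¹ : ℝ) • am) (y + (2⁻¹ : ℝ) • bm) : ℝ) : ℂ)) =
        Complex.exp (Complex.I * ((dotp ((2⁻¹ : ℝ) • am) ((4⁻¹ : ℝ) • bm) : ℝ) : ℂ)) *
          Complex.exp (Complex.I * ((dotp ((2⁻¹ : ℝ) • am) (y + (4⁻¹ : ℝ) • bm) : ℝ) : ℂ)) := by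
    intro y
    rw [← cexp_I_mul_dotp_add]
    congr 4
    module
  rw [hsymbol, weylOp_cexp_fst_mul, weylOp_cexp_snd_mul]
  simp only [hshift, mul_assoc, weylOp_const_mul, cexp_I_mul_dotp_add _ x]
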